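/- Let p, q, r, a, b, ν ∈ ℝ with a ≠ 0, p ≠ 0, A = 12·a·q/p and ν = (4·a⁴·q + b²·r)/a. Then U(ξ) = A·tanh(ξ) satisfies −ν·a·U''(ξ) + p·a³·U''(ξ)·U'(ξ) + q·a⁴·U''''(ξ) + r·b²·U''(ξ) = 0 for all ξ ∈ ℝ. -/

import Mathlib

/-!
Since `tanh' = 1 - tanh²`, the derivative of a polynomial in `tanh` is again a polynomial in
`tanh`, obtained by `P ↦ P' · (1 - X²)`. Four such steps express the left-hand side for
`U = A tanh` as a polynomial in `tanh ξ` whose coefficients are multiples of `ν a - 4 a⁴ q - b² r`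
and of `A (p A - 12 a q)`, both of which vanish for the given `ν` and `A`.
-/

open Real
open scoped Polynomial

theorem Real.hasDerivAt_tanh (x : ℝ) : HasDerivAt tanh (1 - tanh x ^ 2) x := by
  have h := (hasDerivAt_sinh x).div (hasDerivAt_cosh x) (cosh_pos x).ne'
  rw [show sinh / cosh = tanh by funext y; simp [tanh_eq_sinh_div_cosh]] at h
  refine h.congr_deriv ?_
  rw [tanh_eq_sinh_div_cosh]
  field_simp

noncomputable def Polynomial.tanhDeriv (P : ℝ[X]) : ℝ[X] := P.derivative * (1 - .X ^ 2)

theorem hasDerivAt_eval_tanh (P : ℝ[X]) (x : ℝ) :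
    HasDerivAt (fun s => P.eval (tanh s)) (P.tanhDeriv.eval (tanh x)) x :=
  ((P.hasDerivAt (tanh x)).comp x (hasDerivAt_tanh x)).congr_deriv
    (by simp [Polynomial.tanhDeriv])

theorem iteratedDeriv_eval_tanh (n : ℕ) (P : ℝ[X]) :
    iteratedDeriv n (fun s => P.eval (tanh s)) =
      fun s => (Polynomial.tanhDeriv^[n] P).eval (tanh s) := by
  induction n generalizing P with
  | zero => rfl
  | succ n ih =>
    have hP : deriv (fun s => P.eval (tanh s)) = fun s => P.tanhDeriv.eval (tanh s) :=
      funext fun x => (hasDerivAt_eval_tanh P x).deriv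
    rw [iteratedDeriv_succ', hP, ih, Function.iterate_succ_apply]

theorem kp_residual_const_mul_tanh (p q r a b ν A x : ℝ) :
    -ν * a * iteratedDeriv 2 (fun s => A * tanh s) x
      + p * a^3 * iteratedDeriv 2 (fun s => A * tanh s) x * deriv (fun s => A * tanh s) x
      + q * a^4 * iteratedDeriv 4 (fun s => A * tanh s) x
      + r * b^2 * iteratedDeriv 2 (fun s => A * tanh s) x
    = -2 * A * tanh x * (1 - tanh x ^ 2)
        * (-(ν * a - 4 * a^4 * q - b^2 * r) + a^3 * (p * A - 12 * a * q) * (1 - tanh x ^ 2)) := by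
  have hU : (fun s => A * tanh s) = fun s => (Polynomial.C A * .X).eval (tanh s) := by simp
  rw [hU, ← iteratedDeriv_one, iteratedDeriv_eval_tanh, iteratedDeriv_eval_tanh,
    iteratedDeriv_eval_tanh]
  simp only [neg_mul, Function.iterate_succ_apply', Function.iterate_zero_apply,
    Polynomial.tanhDeriv, Polynomial.derivative_mul, Polynomial.derivative_C, zero_mul,
    Polynomial.derivative_X, mul_one, zero_add, Polynomial.derivative_sub,
    Polynomial.derivative_one, Polynomial.derivative_X_pow_succ, Nat.cast_one, map_add, map_one,
    pow_one, zero_sub, mul_neg, Polynomial.eval_neg, Polynomial.eval_mul, Polynomial.eval_C,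
    Polynomial.eval_add, Polynomial.eval_one, Polynomial.eval_X, Polynomial.eval_sub,
    Polynomial.eval_pow, neg_neg, Polynomial.derivative_neg, add_zero, neg_add_rev, mul_zero,
    neg_sub]
  ring

theorem fpKP_tanh_solution_general (p q r a b ν : ℝ) (ha : a ≠ 0)
    (hν : ν = (4 * a^4 * q + b^2 * r) / a) :
    let A := 12 * a * q / p
    ∀ ξ : ℝ, -ν * a * iteratedDeriv 2 (fun s => A * Real.tanh s) ξ
      + p * a^3 * iteratedDeriv 2 (fun s => A * Real.tanh s) ξ
          * deriv (fun s => A * Real.tanh s) ξ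
      + q * a^4 * iteratedDeriv 4 (fun s => A * Real.tanh s) ξ
      + r * b^2 * iteratedDeriv 2 (fun s => A * Real.tanh s) ξ = 0 := by
  intro A ξ
  have hνa : ν * a - 4 * a^4 * q - b^2 * r = 0 := by
    rw [hν, div_mul_cancel₀ _ ha]
    ring
  -- for `p = 0` the amplitude `A` is the junk value `0`
  have hA : A * (p * A - 12 * a * q) = 0 := by
    rcases eq_or_ne p 0 with rfl | hp
    · simp [A]
    · rw [mul_div_cancel₀ _ hp, sub_self, mul_zero]
  rw [kp_residual_const_mul_tanh, hνa]
  linear_combination (-2 * a^3 * tanh ξ * (1 - tanh ξ ^ 2) ^ 2) * hA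

theorem fpKP_tanh_solution (p q r a b ν : ℝ) (ha : a ≠ 0) (hp : p ≠ 0)
    (hν : ν = (4 * a^4 * q + b^2 * r) / a) :
    let A := 12 * a * q / p
    ∀ ξ : ℝ, -ν * a * iteratedDeriv 2 (fun s => A * Real.tanh s) ξ
      + p * a^3 * iteratedDeriv 2 (fun s => A * Real.tanh s) ξ
          * deriv (fun s => A * Real.tanh s) ξ
      + q * a^4 * iteratedDeriv 4 (fun s => A * Real.tanh s) ξ
      + r * b^2 * iteratedDeriv 2 (fun s => A * Real.tanh s) ξ = 0 :=
  fpKP_tanh_solution_general p q r a b ν ha hν
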